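/- Let GEO be the geometric mixture over strictly positive distributions p_1, …, p_m on a finite alphabet X, with pmax and pmin the maximal and minimal entries of the probability matrix. Then for all w ∈ ℝ^m and x ∈ X with GEO(x; w) < 1: |∇ℓ(w)|² ≤ a·ℓ(w), where ℓ(w) = -log GEO(x; w) and a = (m/log e)·log²(pmax/pmin). -/

import Mathlib

/-!
In log-coordinates `u y = (log p_i(y))_i` the geometric mixture is the softmax (Gibbs) weight
`GEO(y; w) = exp ⟪u y, w⟫ / ∑_z exp ⟪u z, w⟫`, so `ℓ(w) = (log-sum-exp(w) - ⟪u x, w⟫) / ln 2` and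
`∇ℓ(w) = (ln 2)⁻¹ ∑_y GEO(y; w) (u y - u x)`. The term `y = x` vanishes and every
`‖u y - u x‖ ≤ √m ln(pmax/pmin)`, so `|∇ℓ|² ≤ (1 - GEO)² m ln²(pmax/pmin) / ln² 2`.
Finally `(1 - GEO)² ≤ 1 - GEO ≤ -ln GEO = ℓ ln 2`.
-/

noncomputable def geoMix {m N : ℕ} (p : Fin m → Fin N → ℝ) (w : Fin m → ℝ) (x : Fin N) : ℝ :=
  (∏ i, p i x ^ w i) / ∑ y, ∏ i, p i y ^ w i

open Real Finset RealInnerProductSpace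

section Gibbs

variable {ι E : Type*} [Fintype ι] [Nonempty ι] [NormedAddCommGroup E] [InnerProductSpace ℝ E]

noncomputable def gibbsWeight (u : ι → E) (v : E) (y : ι) : ℝ :=
  exp ⟪u y, v⟫ / ∑ z, exp ⟪u z, v⟫

lemma sum_exp_inner_pos (u : ι → E) (v : E) : 0 < ∑ z, exp ⟪u z, v⟫ :=
  Finset.sum_pos (fun _ _ => exp_pos _) univ_nonempty

lemma gibbsWeight_pos (u : ι → E) (v : E) (y : ι) : 0 < gibbsWeight u v y :=
  div_pos (exp_pos _) (sum_exp_inner_pos u v)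

lemma sum_gibbsWeight (u : ι → E) (v : E) : ∑ y, gibbsWeight u v y = 1 := by
  simp only [gibbsWeight, ← Finset.sum_div, div_self (sum_exp_inner_pos u v).ne']

lemma gibbsWeight_le_one (u : ι → E) (v : E) (y : ι) : gibbsWeight u v y ≤ 1 :=
  sum_gibbsWeight u v ▸
    single_le_sum (fun z _ => (gibbsWeight_pos u v z).le) (mem_univ y)

lemma neg_log_gibbsWeight (u : ι → E) (v : E) (x : ι) :
    -log (gibbsWeight u v x) = log (∑ z, exp ⟪u z, v⟫) - ⟪u x, v⟫ := by
  rw [gibbsWeight, log_div (exp_pos _).ne' (sum_exp_inner_pos u v).ne', log_exp]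
  ring

lemma hasFDerivAt_log_sum_exp_inner (u : ι → E) (w : E) :
    HasFDerivAt (fun v => log (∑ z, exp ⟪u z, v⟫))
      (∑ y, gibbsWeight u w y • innerSL ℝ (u y)) w := by
  have hsum : HasFDerivAt (fun v => ∑ z, exp ⟪u z, v⟫)
      (∑ y, exp ⟪u y, w⟫ • innerSL ℝ (u y)) w :=
    HasFDerivAt.fun_sum fun y _ => (innerSL ℝ (u y)).hasFDerivAt.exp
  convert hsum.log (sum_exp_inner_pos u w).ne' using 1
  simp only [smul_sum, smul_smul, gibbsWeight, div_eq_inv_mul]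

lemma hasGradientAt_neg_log_gibbsWeight [CompleteSpace E] (u : ι → E) (w : E) (x : ι) :
    HasGradientAt (fun v => -log (gibbsWeight u v x))
      (∑ y, gibbsWeight u w y • (u y - u x)) w := by
  have hx : ∑ y, gibbsWeight u w y • (u y - u x) = ∑ y, gibbsWeight u w y • u y - u x := by
    simp only [smul_sub, sum_sub_distrib, ← sum_smul, sum_gibbsWeight, one_smul]
  have hderiv : HasFDerivAt (fun v => log (∑ z, exp ⟪u z, v⟫) - ⟪u x, v⟫)
      (∑ y, gibbsWeight u w y • innerSL ℝ (u y) - innerSL ℝ (u x)) w :=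
    (hasFDerivAt_log_sum_exp_inner u w).sub (innerSL ℝ (u x)).hasFDerivAt
  have hdual : InnerProductSpace.toDual ℝ E (∑ y, gibbsWeight u w y • u y - u x) =
      ∑ y, gibbsWeight u w y • innerSL ℝ (u y) - innerSL ℝ (u x) := by
    ext v
    simp
  rw [hasGradientAt_iff_hasFDerivAt, hx, hdual, funext (neg_log_gibbsWeight u · x)]
  exact hderiv

end Gibbs

lemma norm_sum_smul_sub_le {ι F : Type*} [Fintype ι] [SeminormedAddCommGroup F]
    [NormedSpace ℝ F] {g : ι → ℝ} (hg0 : ∀ y, 0 ≤ g y) (hg1 : ∑ y, g y = 1) (u : ι → F) (x : ι)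
    {D : ℝ} (hD : ∀ y, ‖u y - u x‖ ≤ D) :
    ‖∑ y, g y • (u y - u x)‖ ≤ (1 - g x) * D := by
  classical
  rw [← sum_erase univ (a := x) (by simp)]
  calc ‖∑ y ∈ univ.erase x, g y • (u y - u x)‖
      ≤ ∑ y ∈ univ.erase x, g y * D := by
        refine (norm_sum_le _ _).trans (sum_le_sum fun y _ => ?_)
        rw [norm_smul, Real.norm_of_nonneg (hg0 y)]
        exact mul_le_mul_of_nonneg_left (hD y) (hg0 y)
    _ = (1 - g x) * D := by rw [← sum_mul, sum_erase_eq_sub (mem_univ x), hg1]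

lemma EuclideanSpace.norm_le_sqrt_card_mul {ι : Type*} [Fintype ι] (v : EuclideanSpace ℝ ι)
    {L : ℝ} (hv : ∀ i, |v i| ≤ L) : ‖v‖ ≤ √(Fintype.card ι) * L := by
  rcases isEmpty_or_nonempty ι with hι | ⟨⟨i⟩⟩
  · simp [Subsingleton.elim v 0]
  have hL : 0 ≤ L := (abs_nonneg _).trans (hv i)
  rw [EuclideanSpace.norm_eq, ← sqrt_sq hL, ← sqrt_mul (Nat.cast_nonneg _)]
  refine sqrt_le_sqrt ?_
  calc ∑ i, ‖v i‖ ^ 2 ≤ ∑ _i : ι, L ^ 2 :=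
        sum_le_sum fun i _ => pow_le_pow_left₀ (norm_nonneg _) (hv i) 2
    _ = Fintype.card ι * L ^ 2 := by simp

lemma abs_log_sub_log_le_log_div {a b lo hi : ℝ} (hlo : 0 < lo) (ha : a ∈ Set.Icc lo hi)
    (hb : b ∈ Set.Icc lo hi) : |log a - log b| ≤ log (hi / lo) := by
  have hmono : ∀ {s t}, s ∈ Set.Icc lo hi → t ∈ Set.Icc lo hi → log s - log t ≤ log (hi / lo) :=
    fun {s t} hs ht => by
      rw [log_div (by linarith [hs.1, hs.2]) hlo.ne']
      linarith [log_le_log (hlo.trans_le hs.1) hs.2, log_le_log hlo ht.1]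
  exact abs_sub_le_iff.2 ⟨hmono ha hb, hmono hb ha⟩

noncomputable def logProbVec {m N : ℕ} (p : Fin m → Fin N → ℝ) (y : Fin N) :
    EuclideanSpace ℝ (Fin m) :=
  WithLp.toLp 2 fun i => log (p i y)

section GeoMix

variable {m N : ℕ} {p : Fin m → Fin N → ℝ}

lemma geoMix_eq_gibbsWeight (hpos : ∀ i y, 0 < p i y) (v : EuclideanSpace ℝ (Fin m))
    (x : Fin N) : geoMix p v x = gibbsWeight (logProbVec p) v x := by
  have hprod : ∀ y, ∏ i, p i y ^ v i = exp ⟪logProbVec p y, v⟫ := fun y => by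
    simp only [rpow_def_of_pos (hpos _ y), ← exp_sum, PiLp.inner_apply, logProbVec]
    simp [mul_comm]
  simp only [geoMix, gibbsWeight, hprod]

lemma hasGradientAt_neg_logb_geoMix (hpos : ∀ i y, 0 < p i y) (w : EuclideanSpace ℝ (Fin m))
    (x : Fin N) :
    HasGradientAt (fun v : EuclideanSpace ℝ (Fin m) => -logb 2 (geoMix p v x))
      ((log 2)⁻¹ • ∑ y, gibbsWeight (logProbVec p) w y • (logProbVec p y - logProbVec p x)) w := by
  have : Nonempty (Fin N) := ⟨x⟩
  have h := hasGradientAt_neg_log_gibbsWeight (logProbVec p) w x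
  have hfun : (fun v : EuclideanSpace ℝ (Fin m) => -logb 2 (geoMix p v x)) =
      fun v => (log 2)⁻¹ * -log (gibbsWeight (logProbVec p) v x) := by
    funext v
    rw [geoMix_eq_gibbsWeight hpos, logb]
    ring
  rw [hasGradientAt_iff_hasFDerivAt] at h ⊢
  rw [hfun, map_smul]
  exact h.const_mul _

lemma norm_logProbVec_sub_le {lo hi : ℝ} (hlo : 0 < lo) (hp : ∀ i y, p i y ∈ Set.Icc lo hi)
    (y z : Fin N) : ‖logProbVec p y - logProbVec p z‖ ≤ √m * log (hi / lo) := by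
  simpa using EuclideanSpace.norm_le_sqrt_card_mul (logProbVec p y - logProbVec p z) fun i =>
    abs_log_sub_log_le_log_div hlo (hp i y) (hp i z)

end GeoMix

theorem stmt_12_general (m N : ℕ)
    (p : Fin m → Fin N → ℝ)
    (hpos : ∀ i x, 0 < p i x)
    (pmax pmin : ℝ)
    (hmax : IsGreatest {r | ∃ i x, p i x = r} pmax)
    (hmin : IsLeast {r | ∃ i x, p i x = r} pmin)
    (x : Fin N) (w G : EuclideanSpace ℝ (Fin m))
    (hG : HasGradientAt (fun v : EuclideanSpace ℝ (Fin m) => -Real.logb 2 (geoMix p v x)) G w)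
    (a : ℝ) (ha : a = (m / Real.logb 2 (Real.exp 1)) * (Real.logb 2 (pmax / pmin)) ^ 2) :
    ‖G‖ ^ 2 ≤ a * (-Real.logb 2 (geoMix p w x)) := by
  have : Nonempty (Fin N) := ⟨x⟩
  set u := logProbVec p
  set g := gibbsWeight u w
  set L := log (pmax / pmin)
  obtain rfl := hG.unique (hasGradientAt_neg_logb_geoMix hpos w x)
  have hpmin : 0 < pmin := by obtain ⟨i, y, rfl⟩ := hmin.1; exact hpos i y
  have hnorm : ‖∑ y, g y • (u y - u x)‖ ≤ (1 - g x) * (√m * L) :=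
    norm_sum_smul_sub_le (fun y => (gibbsWeight_pos u w y).le) (sum_gibbsWeight u w) u x
      (norm_logProbVec_sub_le hpmin (fun i y => ⟨hmin.2 ⟨i, y, rfl⟩, hmax.2 ⟨i, y, rfl⟩⟩) · x)
  have hg0 : 0 < g x := gibbsWeight_pos u w x
  have hg1 : g x ≤ 1 := gibbsWeight_le_one u w x
  have hloss : 1 - g x ≤ -log (g x) := by linarith [log_le_sub_one_of_pos hg0]
  calc ‖(log 2)⁻¹ • ∑ y, g y • (u y - u x)‖ ^ 2
      = (log 2)⁻¹ ^ 2 * ‖∑ y, g y • (u y - u x)‖ ^ 2 := by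
        rw [norm_smul, mul_pow, norm_inv, Real.norm_of_nonneg (log_nonneg one_le_two)]
    _ ≤ (log 2)⁻¹ ^ 2 * ((1 - g x) ^ 2 * (m * L ^ 2)) := by
        gcongr
        calc ‖∑ y, g y • (u y - u x)‖ ^ 2 ≤ ((1 - g x) * (√m * L)) ^ 2 := by gcongr
          _ = (1 - g x) ^ 2 * (m * L ^ 2) := by rw [mul_pow, mul_pow, sq_sqrt m.cast_nonneg]
    _ ≤ (log 2)⁻¹ ^ 2 * (-log (g x) * (m * L ^ 2)) := by
        gcongr
        exact (pow_le_of_le_one (by linarith) (by linarith) two_ne_zero).trans hloss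
    _ = a * -logb 2 (geoMix p w x) := by
        rw [ha, geoMix_eq_gibbsWeight hpos, logb, logb, logb, log_exp]
        field_simp
        ring

theorem stmt_12 (m N : ℕ) (hm : 0 < m) (hN : 2 ≤ N)
    (p : Fin m → Fin N → ℝ)
    (hpos : ∀ i x, 0 < p i x) (hsum : ∀ i, ∑ x, p i x = 1)
    (pmax pmin : ℝ)
    (hmax : IsGreatest {r | ∃ i x, p i x = r} pmax)
    (hmin : IsLeast {r | ∃ i x, p i x = r} pmin)
    (x : Fin N) (w G : EuclideanSpace ℝ (Fin m))
    (hlt : geoMix p w x < 1)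
    (hG : HasGradientAt (fun v : EuclideanSpace ℝ (Fin m) => -Real.logb 2 (geoMix p v x)) G w)
    (a : ℝ) (ha : a = (m / Real.logb 2 (Real.exp 1)) * (Real.logb 2 (pmax / pmin)) ^ 2) :
    ‖G‖ ^ 2 ≤ a * (-Real.logb 2 (geoMix p w x)) :=
  stmt_12_general m N p hpos pmax pmin hmax hmin x w G hG a ha
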